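/- There exists an efficient dominating set D of G with D ∩ S = S' if and only if the predicate T(U, p) holds. -/

import Mathlib

/-- The closed neighborhood `N[v]` of a vertex `v`. -/
def closedNbhd {V : Type*} (G : SimpleGraph V) (v : V) : Set V :=
  {w | G.Adj v w ∨ w = v}

/-- The closed neighborhood `N[X] = ⋃_{v ∈ X} N[v]` of a set of vertices. -/
def closedNbhdSet {V : Type*} (G : SimpleGraph V) (X : Set V) : Set V :=
  ⋃ v ∈ X, closedNbhd G v

/-- `D` is an efficient dominating set of `G`: every vertex has exactly one
element of `D` in its closed neighborhood, i.e. `|N[v] ∩ D| = 1`. -/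
def IsEDS {V : Type*} (G : SimpleGraph V) (D : Set V) : Prop :=
  ∀ v : V, ∃! u : V, u ∈ D ∧ u ∈ closedNbhd G v

/-- The graph `G - S`: the graph obtained from `G` by deleting the vertices of `S`
(kept on the same vertex type; vertices of `S` become isolated). -/
def deleteSet {V : Type*} (G : SimpleGraph V) (S : Set V) : SimpleGraph V where
  Adj v w := G.Adj v w ∧ v ∉ S ∧ w ∉ S
  symm := by
    refine ⟨?_⟩
    intro v w h
    exact ⟨h.1.symm, h.2.2, h.2.1⟩
  loopless := by
    refine ⟨?_⟩
    intro v h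
    exact G.irrefl h.1

/-- The predicate `T(W, j)`: there exist vertices `v i ∈ C i` for the first `j`
clusters such that `W` is the disjoint union of the sets `N[v i] ∩ U` for `i < j`,
and for every `i < j`, `C i ⊆ N[v i] ∪ N[S']` and `N[v i] ∩ N[S'] = ∅`. -/
def TPred {V : Type*} (G : SimpleGraph V) {p : ℕ} (C : Fin p → Set V)
    (S' U : Set V) (W : Set V) (j : ℕ) : Prop :=
  ∃ v : Fin p → V,
    (∀ i : Fin p, (i : ℕ) < j → v i ∈ C i) ∧
    (W = ⋃ (i : Fin p), ⋃ (_ : (i : ℕ) < j), (closedNbhd G (v i) ∩ U)) ∧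
    (∀ i i' : Fin p, (i : ℕ) < j → (i' : ℕ) < j → i ≠ i' →
      (closedNbhd G (v i) ∩ U) ∩ (closedNbhd G (v i') ∩ U) = ∅) ∧
    (∀ i : Fin p, (i : ℕ) < j →
      C i ⊆ closedNbhd G (v i) ∪ closedNbhdSet G S' ∧
      closedNbhd G (v i) ∩ closedNbhdSet G S' = ∅)

/-!
An efficient dominating set is exactly a set whose closed neighbourhoods partition the vertex set.
If `D` is one with `D ∩ S = S'`, every vertex of `D \ S'` lies outside `S`, hence in some cluster
`C i`, and the dominator of a vertex of `C i` that is not dominated from `S'` lies in `C i` as well.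
Since `C i` has diameter at most two, any two of its vertices share a closed neighbour, so `D`
meets `C i` in exactly one vertex `v i`; the sets `N[v i]` then cover `U` and `C i \ N[S']`
disjointly and avoid `N[S']`. Conversely, for such a choice of `v`, the closed neighbourhoods of
`S' ∪ {v i}` partition the vertex set: a vertex in `N[v i] ∩ N[v j]` lies either in `U`, or
outside `S` and hence in `C i ∩ C j`.
-/

open Function

section

variable {V ι : Type*} {G : SimpleGraph V}

lemma mem_closedNbhd_comm {v w : V} : w ∈ closedNbhd G v ↔ v ∈ closedNbhd G w := by
  change G.Adj v w ∨ w = v ↔ G.Adj w v ∨ v = w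
  rw [G.adj_comm, eq_comm]

lemma self_mem_closedNbhd (v : V) : v ∈ closedNbhd G v := Or.inr rfl

lemma mem_closedNbhdSet {X : Set V} {w : V} :
    w ∈ closedNbhdSet G X ↔ ∃ s ∈ X, w ∈ closedNbhd G s := by
  simp [closedNbhdSet]

lemma closedNbhd_subset_closedNbhdSet {X : Set V} {s : V} (hs : s ∈ X) :
    closedNbhd G s ⊆ closedNbhdSet G X :=
  Set.subset_biUnion_of_mem hs

lemma disjoint_closedNbhdSet_right {A X : Set V} :
    Disjoint A (closedNbhdSet G X) ↔ ∀ s ∈ X, Disjoint A (closedNbhd G s) :=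
  Set.disjoint_iUnion₂_right

lemma isEDS_iff {D : Set V} :
    IsEDS G D ↔ (∀ w, ∃ d ∈ D, w ∈ closedNbhd G d) ∧ D.PairwiseDisjoint (closedNbhd G) := by
  constructor
  · intro hD
    refine ⟨fun w => ?_, fun d hd d' hd' hne => Set.disjoint_left.mpr fun w hw hw' => ?_⟩
    · obtain ⟨d, ⟨hd, hwd⟩, -⟩ := hD w
      exact ⟨d, hd, mem_closedNbhd_comm.mp hwd⟩
    · exact hne ((hD w).unique ⟨hd, mem_closedNbhd_comm.mp hw⟩ ⟨hd', mem_closedNbhd_comm.mp hw'⟩)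
  · rintro ⟨hdom, hpd⟩ w
    obtain ⟨d, hd, hwd⟩ := hdom w
    exact ⟨d, ⟨hd, mem_closedNbhd_comm.mp hwd⟩, fun d' ⟨hd', hd'w⟩ =>
      hpd.elim_set hd' hd w (mem_closedNbhd_comm.mp hd'w) hwd⟩

lemma exists_mem_closedNbhd_of_dist_le_two {H : SimpleGraph V} (hle : H ≤ G) {a b : V}
    (h : a = b ∨ H.Adj a b ∨ ∃ x, H.Adj a x ∧ H.Adj x b) :
    ∃ x, a ∈ closedNbhd G x ∧ b ∈ closedNbhd G x := by
  rcases h with rfl | hab | ⟨x, hax, hxb⟩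
  · exact ⟨a, self_mem_closedNbhd a, self_mem_closedNbhd a⟩
  · exact ⟨b, Or.inl (hle hab).symm, self_mem_closedNbhd b⟩
  · exact ⟨x, Or.inl (hle hax).symm, Or.inl (hle hxb)⟩

lemma deleteSet_le (S : Set V) : deleteSet G S ≤ G := fun _ _ h => h.1

lemma mem_supp_of_mem_closedNbhd {S : Set V} {K : (deleteSet G S).ConnectedComponent} {a b : V}
    (ha : a ∈ K.supp) (hb : b ∈ closedNbhd G a) (haS : a ∉ S) (hbS : b ∉ S) : b ∈ K.supp := by
  rcases hb with hab | rfl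
  · exact K.mem_supp_of_adj_mem_supp ha ⟨hab, haS, hbS⟩
  · exact ha

/-- `v` witnesses `T(U, p)`, with the clusters indexed by an arbitrary type. -/
structure IsClusterDominators (G : SimpleGraph V) (C : ι → Set V) (S' U : Set V) (v : ι → V) :
    Prop where
  mem : ∀ i, v i ∈ C i
  iUnion_closedNbhd_inter : ⋃ i, closedNbhd G (v i) ∩ U = U
  pairwise_disjoint : Pairwise (Disjoint on fun i => closedNbhd G (v i) ∩ U)
  subset_union : ∀ i, C i ⊆ closedNbhd G (v i) ∪ closedNbhdSet G S'
  disjoint_closedNbhdSet : ∀ i, Disjoint (closedNbhd G (v i)) (closedNbhdSet G S')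

lemma tPred_iff_exists_isClusterDominators {p : ℕ} {C : Fin p → Set V} {S' U : Set V} :
    TPred G C S' U U p ↔ ∃ v, IsClusterDominators G C S' U v := by
  constructor
  · rintro ⟨v, hmem, hU, hdisj, hsub⟩
    refine ⟨v, fun i => hmem i i.isLt, ?_, fun i j hij => ?_, fun i => (hsub i i.isLt).1,
      fun i => Set.disjoint_iff_inter_eq_empty.mpr (hsub i i.isLt).2⟩
    · simpa only [Fin.is_lt, Set.iUnion_true] using hU.symm
    · exact Set.disjoint_iff_inter_eq_empty.mpr (hdisj i j i.isLt j.isLt hij)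
  · rintro ⟨v, hmem, hU, hdisj, hsub, hdisjS'⟩
    refine ⟨v, fun i _ => hmem i, ?_, fun i j _ _ hij => Set.disjoint_iff_inter_eq_empty.mp
      (hdisj hij), fun i _ => ⟨hsub i, Set.disjoint_iff_inter_eq_empty.mp (hdisjS' i)⟩⟩
    simp_rw [Fin.is_lt, Set.iUnion_true]
    exact hU.symm

section Clusters

variable {S S' : Set V} {C : ι → Set V}

lemma notMem_of_mem_of_iUnion_eq_compl (hcover : ⋃ i, C i = Sᶜ) {i : ι} {a : V} (ha : a ∈ C i) :
    a ∉ S := by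
  have : a ∈ ⋃ i, C i := Set.mem_iUnion_of_mem i ha
  rwa [hcover] at this

theorem IsEDS.exists_isClusterDominators {D : Set V} (hD : IsEDS G D) (hDS : D ∩ S = S')
    (hcover : ⋃ i, C i = Sᶜ)
    (hclosed : ∀ i, ∀ a ∈ C i, ∀ b ∈ closedNbhd G a, b ∉ S → b ∈ C i)
    (hdisj : Pairwise (Disjoint on C))
    (hdiam : ∀ i, ∀ a ∈ C i, ∀ b ∈ C i, ∃ x, a ∈ closedNbhd G x ∧ b ∈ closedNbhd G x)
    (hnot : ∀ i, ¬ C i ⊆ closedNbhdSet G S') :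
    ∃ v, IsClusterDominators G C S' (S \ closedNbhdSet G S') v := by
  obtain ⟨hdom, hpd⟩ := isEDS_iff.mp hD
  have notMem_S : ∀ d ∈ D, d ∉ S' → d ∉ S := fun d hd hdS' hdS => hdS' (hDS ▸ ⟨hd, hdS⟩)
  have mem_of_dominates : ∀ i, ∀ w ∈ C i, ∀ d ∈ D, w ∈ closedNbhd G d → d ∉ S' → d ∈ C i :=
    fun i w hw d hd hwd hdS' =>
      hclosed i w hw d (mem_closedNbhd_comm.mp hwd) (notMem_S d hd hdS')
  have unique : ∀ i, ∀ d ∈ D, ∀ d' ∈ D, d ∈ C i → d' ∈ C i → d = d' := by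
    intro i d hd d' hd' hdC hd'C
    obtain ⟨x, hdx, hd'x⟩ := hdiam i d hdC d' hd'C
    exact hpd.elim_set hd hd' x (mem_closedNbhd_comm.mp hdx) (mem_closedNbhd_comm.mp hd'x)
  have exists_mem : ∀ i, ∃ d ∈ D, d ∈ C i := by
    intro i
    obtain ⟨w, hw, hwS'⟩ := Set.not_subset.mp (hnot i)
    obtain ⟨d, hd, hwd⟩ := hdom w
    exact ⟨d, hd, mem_of_dominates i w hw d hd hwd fun hdS' =>
      hwS' (mem_closedNbhdSet.mpr ⟨d, hdS', hwd⟩)⟩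
  choose v hvD hvC using exists_mem
  refine ⟨v, ⟨hvC, ?_, fun i j hij => ?_, fun i w hw => ?_, fun i => ?_⟩⟩
  · refine (Set.iUnion_subset fun i => Set.inter_subset_right).antisymm fun u hu => ?_
    obtain ⟨d, hd, hud⟩ := hdom u
    have hdS' : d ∉ S' := fun hdS' => hu.2 (mem_closedNbhdSet.mpr ⟨d, hdS', hud⟩)
    have hdC : d ∈ ⋃ j, C j := hcover ▸ notMem_S d hd hdS'
    obtain ⟨j, hdj⟩ := Set.mem_iUnion.mp hdC
    exact Set.mem_iUnion.mpr ⟨j, unique j d hd (v j) (hvD j) hdj (hvC j) ▸ hud, hu⟩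
  · have hne : v i ≠ v j := fun h => Set.disjoint_left.mp (hdisj hij) (hvC i) (h ▸ hvC j)
    exact (hpd (hvD i) (hvD j) hne).mono Set.inter_subset_left Set.inter_subset_left
  · obtain ⟨d, hd, hwd⟩ := hdom w
    by_cases hdS' : d ∈ S'
    · exact Or.inr (mem_closedNbhdSet.mpr ⟨d, hdS', hwd⟩)
    · have hdv : d = v i :=
        unique i d hd (v i) (hvD i) (mem_of_dominates i w hw d hd hwd hdS') (hvC i)
      exact Or.inl (hdv ▸ hwd)
  · refine disjoint_closedNbhdSet_right.mpr fun s hs => ?_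
    have hs' : s ∈ D ∩ S := hDS ▸ hs
    have hvS : v i ∉ S := notMem_of_mem_of_iUnion_eq_compl hcover (hvC i)
    exact hpd (hvD i) hs'.1 fun h => hvS (h ▸ hs'.2)

theorem IsClusterDominators.isEDS_union_range {v : ι → V}
    (hv : IsClusterDominators G C S' (S \ closedNbhdSet G S') v)
    (hS' : S'.PairwiseDisjoint (closedNbhd G))
    (hcover : ⋃ i, C i = Sᶜ)
    (hclosed : ∀ i, ∀ a ∈ C i, ∀ b ∈ closedNbhd G a, b ∉ S → b ∈ C i)
    (hdisj : Pairwise (Disjoint on C)) :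
    IsEDS G (S' ∪ Set.range v) := by
  refine isEDS_iff.mpr ⟨fun w => ?_, hS'.union ?_ ?_⟩
  · by_cases hwS' : w ∈ closedNbhdSet G S'
    · obtain ⟨s, hs, hws⟩ := mem_closedNbhdSet.mp hwS'
      exact ⟨s, Or.inl hs, hws⟩
    by_cases hwS : w ∈ S
    · have hwU : w ∈ ⋃ i, closedNbhd G (v i) ∩ (S \ closedNbhdSet G S') := by
        rw [hv.iUnion_closedNbhd_inter]
        exact ⟨hwS, hwS'⟩
      obtain ⟨i, hwi, -⟩ := Set.mem_iUnion.mp hwU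
      exact ⟨v i, Or.inr ⟨i, rfl⟩, hwi⟩
    · obtain ⟨i, hwi⟩ := Set.mem_iUnion.mp (hcover ▸ hwS : w ∈ ⋃ i, C i)
      exact ⟨v i, Or.inr ⟨i, rfl⟩, (hv.subset_union i hwi).resolve_right hwS'⟩
  · rintro _ ⟨i, rfl⟩ _ ⟨j, rfl⟩ hne
    have hij : i ≠ j := fun h => hne (congrArg v h)
    refine Set.disjoint_left.mpr fun w hwi hwj => ?_
    by_cases hwS : w ∈ S
    · have hwU : w ∈ S \ closedNbhdSet G S' :=
        ⟨hwS, Set.disjoint_left.mp (hv.disjoint_closedNbhdSet i) hwi⟩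
      exact Set.disjoint_left.mp (hv.pairwise_disjoint hij) ⟨hwi, hwU⟩ ⟨hwj, hwU⟩
    · exact Set.disjoint_left.mp (hdisj hij) (hclosed i (v i) (hv.mem i) w hwi hwS)
        (hclosed j (v j) (hv.mem j) w hwj hwS)
  · rintro s hs _ ⟨i, rfl⟩ -
    exact ((hv.disjoint_closedNbhdSet i).mono_right (closedNbhd_subset_closedNbhdSet hs)).symm

theorem IsClusterDominators.union_range_inter_eq {U : Set V} {v : ι → V}
    (hv : IsClusterDominators G C S' U v) (hS'S : S' ⊆ S) (hcover : ⋃ i, C i = Sᶜ) :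
    (S' ∪ Set.range v) ∩ S = S' := by
  have hvS : Disjoint (Set.range v) S := Set.disjoint_left.mpr <| by
    rintro _ ⟨i, rfl⟩
    exact notMem_of_mem_of_iUnion_eq_compl hcover (hv.mem i)
  rw [Set.union_inter_distrib_right, Set.inter_eq_left.mpr hS'S, hvS.inter_eq, Set.union_empty]

end Clusters

end

theorem eds_extension_iff_tpred_general {V : Type*} (G : SimpleGraph V)
    (p : ℕ) (S S' U : Set V) (C : Fin p → Set V)
    (hS'S : S' ⊆ S)
    (hS'disj : ∀ s ∈ S', ∀ t ∈ S', s ≠ t → closedNbhd G s ∩ closedNbhd G t = ∅)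
    (hU : U = S \ closedNbhdSet G S')
    (hCcomp : ∀ i, ∃ K : (deleteSet G S).ConnectedComponent, C i = K.supp)
    (hCcover : (⋃ i, C i) = Sᶜ)
    (hCdisj : ∀ i j, i ≠ j → C i ∩ C j = ∅)
    (hCdiam : ∀ i, ∀ v ∈ C i, ∀ w ∈ C i,
      v = w ∨ (deleteSet G S).Adj v w ∨
        ∃ x, (deleteSet G S).Adj v x ∧ (deleteSet G S).Adj x w)
    (hCnot : ∀ i, ¬ (C i ⊆ closedNbhdSet G S')) :
    (∃ D : Set V, IsEDS G D ∧ D ∩ S = S') ↔ TPred G C S' U U p := by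
  subst hU
  have hclosed : ∀ i, ∀ a ∈ C i, ∀ b ∈ closedNbhd G a, b ∉ S → b ∈ C i := by
    intro i a ha b hb hbS
    have haS : a ∉ S := notMem_of_mem_of_iUnion_eq_compl hCcover ha
    obtain ⟨K, hK⟩ := hCcomp i
    rw [hK] at ha ⊢
    exact mem_supp_of_mem_closedNbhd ha hb haS hbS
  have hdisj : Pairwise (Disjoint on C) := fun i j hij =>
    Set.disjoint_iff_inter_eq_empty.mpr (hCdisj i j hij)
  have hdiam : ∀ i, ∀ a ∈ C i, ∀ b ∈ C i, ∃ x, a ∈ closedNbhd G x ∧ b ∈ closedNbhd G x :=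
    fun i a ha b hb => exists_mem_closedNbhd_of_dist_le_two (deleteSet_le S) (hCdiam i a ha b hb)
  rw [tPred_iff_exists_isClusterDominators]
  constructor
  · rintro ⟨D, hD, hDS⟩
    exact hD.exists_isClusterDominators hDS hCcover hclosed hdisj hdiam hCnot
  · rintro ⟨v, hv⟩
    have hS' : S'.PairwiseDisjoint (closedNbhd G) := fun s hs t ht hst =>
      Set.disjoint_iff_inter_eq_empty.mpr (hS'disj s hs t ht hst)
    exact ⟨S' ∪ Set.range v, hv.isEDS_union_range hS' hCcover hclosed hdisj,
      hv.union_range_inter_eq hS'S hCcover⟩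

/-- Setup: `S ⊆ V(G)` is such that the connected components of `G - S` are
`C 0, …, C (p-1)`, each of diameter at most 2; `S' ⊆ S` has pairwise disjoint closed
neighborhoods; `U = S \ N[S']`, and no `C i` is contained in `N[S']`.
Then there exists an efficient dominating set `D` of `G` with `D ∩ S = S'`
if and only if the predicate `T(U, p)` holds. -/
theorem eds_extension_iff_tpred {V : Type*} [Fintype V] (G : SimpleGraph V)
    (p : ℕ) (S S' U : Set V) (C : Fin p → Set V)
    (hS'S : S' ⊆ S)
    (hS'disj : ∀ s ∈ S', ∀ t ∈ S', s ≠ t → closedNbhd G s ∩ closedNbhd G t = ∅)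
    (hU : U = S \ closedNbhdSet G S')
    (hCcomp : ∀ i, ∃ K : (deleteSet G S).ConnectedComponent, C i = K.supp)
    (hCS : ∀ i, C i ∩ S = ∅)
    (hCcover : (⋃ i, C i) = Sᶜ)
    (hCdisj : ∀ i j, i ≠ j → C i ∩ C j = ∅)
    (hCdiam : ∀ i, ∀ v ∈ C i, ∀ w ∈ C i,
      v = w ∨ (deleteSet G S).Adj v w ∨
        ∃ x, (deleteSet G S).Adj v x ∧ (deleteSet G S).Adj x w)
    (hCnot : ∀ i, ¬ (C i ⊆ closedNbhdSet G S')) :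
    (∃ D : Set V, IsEDS G D ∧ D ∩ S = S') ↔ TPred G C S' U U p :=
  eds_extension_iff_tpred_general G p S S' U C hS'S hS'disj hU hCcomp hCcover hCdisj hCdiam hCnot
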